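/- If the signed voting signature ω_Π is a nonnegative measure on [0,1/4], then the voting curve n ↦ V_n(Π) is nondecreasing and discretely concave; if −ω_Π is nonnegative, it is nonincreasing and discretely convex. -/

import Mathlib

open MeasureTheory

/-- Odd-budget majority accuracy: `P n q = ℙ(Bin(2n+1,q) ≥ n+1)`. -/
noncomputable def majP (n : ℕ) (q : ℝ) : ℝ :=
  ∑ j ∈ Finset.Icc (n+1) (2*n+1), ((2*n+1).choose j : ℝ) * q^j * (1-q)^(2*n+1-j)

/-- Population voting curve. -/
noncomputable def voteV (μ : Measure ℝ) (n : ℕ) : ℝ := ∫ q, majP n q ∂μ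

lemma aux_fin (μ : Measure ℝ) [IsFiniteMeasure μ] (g : ℝ → ℝ) (hg : ∀ q ∈ Set.Icc (0:ℝ) 1, g q ≤ 1) :
    IsFiniteMeasure ((μ.restrict (Set.Icc 0 1)).withDensity (fun q => ENNReal.ofReal (g q))) := by
  apply isFiniteMeasure_withDensity
  have h : ∫⁻ q, ENNReal.ofReal (g q) ∂(μ.restrict (Set.Icc 0 1)) ≤ ∫⁻ _, 1 ∂(μ.restrict (Set.Icc 0 1)) := by
    refine setLIntegral_mono' measurableSet_Icc fun q hq => ?_
    simpa using ENNReal.ofReal_le_one.2 (hg q hq)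
  refine ne_of_lt (lt_of_le_of_lt h ?_)
  simp [lintegral_one]

/-- Signed voting signature as a signed measure on ℝ (carried on [0,1/4]). -/
noncomputable def signature (μ : Measure ℝ) [IsFiniteMeasure μ] : SignedMeasure ℝ :=
  letI h1 := aux_fin μ (fun q => 2*q-1) (by intro q hq; simp only [Set.mem_Icc] at hq; linarith [hq.2])
  letI h2 := aux_fin μ (fun q => 1-2*q) (by intro q hq; simp only [Set.mem_Icc] at hq; linarith [hq.1])
  (((μ.restrict (Set.Icc 0 1)).withDensity (fun q => ENNReal.ofReal (2*q-1))).map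
      (fun q => q*(1-q))).toSignedMeasure
  - (((μ.restrict (Set.Icc 0 1)).withDensity (fun q => ENNReal.ofReal (1-2*q))).map
      (fun q => q*(1-q))).toSignedMeasure

/-- Integral of a real function against a signed measure, via the Jordan decomposition. -/
noncomputable def sInt {α : Type*} [MeasurableSpace α] (s : SignedMeasure α) (f : α → ℝ) : ℝ :=
  (∫ a, f a ∂s.toJordanDecomposition.posPart) - ∫ a, f a ∂s.toJordanDecomposition.negPart

/-- Limiting majority accuracy. -/
noncomputable def voteVinf (μ : Measure ℝ) : ℝ :=
  (μ (Set.Ioc (1/2 : ℝ) 1)).toReal + (1/2) * (μ {(1/2 : ℝ)}).toReal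

/-- Total-variation norm of the signed voting signature. -/
noncomputable def sigTV (μ : Measure ℝ) [IsFiniteMeasure μ] : ℝ :=
  ((signature μ).totalVariation Set.univ).toReal

/-!
Conditioning on the two extra voters gives
`P_{n+1}(q) - P_n(q) = C(2n+1, n+1) (2q - 1) (q(1-q))^{n+1}`, so the increment
`V_{n+1} - V_n` is the integral of the kernel `k_n(r) = C(2n+1, n+1) r^{n+1}` against `ω_Π`.
On `[0, 1/4]`, where `ω_Π` lives, `k_n ≥ 0` and `k_{n+1} ≤ k_n` (the coefficient ratio is at most
`4`). Splitting `ω_Π` into the pushforwards of `(2q - 1)⁺ Π` and `(2q - 1)⁻ Π`, a signature of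
constant sign orders these two measures, which fixes the sign of the increments and of their
differences.
-/

open Finset

noncomputable def binomTerm (m j : ℕ) (q : ℝ) : ℝ := (m.choose j : ℝ) * q ^ j * (1 - q) ^ (m - j)

noncomputable def binomTail (m k : ℕ) (q : ℝ) : ℝ := ∑ j ∈ Icc k m, binomTerm m j q

lemma majP_eq_binomTail (n : ℕ) (q : ℝ) : majP n q = binomTail (2 * n + 1) (n + 1) q := rfl

lemma binomTerm_succ_succ (m j : ℕ) (q : ℝ) :
    binomTerm (m + 1) (j + 1) q = q * binomTerm m j q + (1 - q) * binomTerm m (j + 1) q := by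
  rcases lt_trichotomy j m with h | rfl | h
  · obtain ⟨d, rfl⟩ := Nat.exists_eq_add_of_lt h
    simp only [binomTerm, Nat.choose_succ_succ', Nat.cast_add,
      show j + d + 1 + 1 - (j + 1) = d + 1 by omega, show j + d + 1 - j = d + 1 by omega,
      show j + d + 1 - (j + 1) = d by omega]
    ring
  · simp [binomTerm, pow_succ, mul_comm]
  · simp [binomTerm, Nat.choose_eq_zero_of_lt h, Nat.choose_eq_zero_of_lt (Nat.succ_lt_succ h),
      Nat.choose_eq_zero_of_lt (h.trans (Nat.lt_succ_self j))]

lemma binomTail_eq_binomTerm_add (q : ℝ) {m k : ℕ} (hkm : k ≤ m) :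
    binomTail m k q = binomTerm m k q + binomTail m (k + 1) q := by
  rw [binomTail, Icc_eq_cons_Ioc hkm, sum_cons, ← Icc_add_one_left_eq_Ioc, binomTail]

lemma binomTail_succ_succ (q : ℝ) {m k : ℕ} (hkm : k ≤ m) :
    binomTail (m + 1) (k + 1) q = binomTail m (k + 1) q + q * binomTerm m k q := by
  have hshift : ∑ j ∈ Icc k m, binomTerm m (j + 1) q = binomTail m (k + 1) q :=
    calc ∑ j ∈ Icc k m, binomTerm m (j + 1) q = ∑ j ∈ Icc (k + 1) (m + 1), binomTerm m j q := by
          rw [← map_add_right_Icc, sum_map]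
          rfl
      _ = binomTail m (k + 1) q + binomTerm m (m + 1) q := sum_Icc_succ_top (by omega) _
      _ = binomTail m (k + 1) q := by simp [binomTerm]
  rw [binomTail, ← map_add_right_Icc k m 1, sum_map]
  simp only [addRightEmbedding_apply, binomTerm_succ_succ, sum_add_distrib, ← mul_sum, hshift]
  rw [← binomTail, binomTail_eq_binomTerm_add q hkm]
  ring

noncomputable def voteKernel (n : ℕ) (r : ℝ) : ℝ := ((2 * n + 1).choose (n + 1) : ℝ) * r ^ (n + 1)

lemma majP_succ_sub (n : ℕ) (q : ℝ) :
    majP (n + 1) q - majP n q = (2 * q - 1) * voteKernel n (q * (1 - q)) := by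
  have hchoose : ((2 * n + 2).choose (n + 1) : ℝ) = 2 * (2 * n + 1).choose (n + 1) := by
    rw [Nat.choose_succ_succ', Nat.choose_symm_half]
    push_cast
    ring
  rw [majP_eq_binomTail, majP_eq_binomTail, show 2 * (n + 1) + 1 = (2 * n + 2) + 1 by ring,
    binomTail_succ_succ q (by omega), binomTail_succ_succ q (by omega),
    binomTail_eq_binomTerm_add q (show n + 1 ≤ 2 * n + 1 by omega)]
  simp only [binomTerm, voteKernel, hchoose, show 2 * n + 2 - (n + 1) = n + 1 by omega,
    show 2 * n + 1 - (n + 1) = n by omega, mul_pow]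
  ring

lemma choose_two_mul_add_three_le (n : ℕ) :
    (2 * n + 3).choose (n + 2) ≤ 4 * (2 * n + 1).choose (n + 1) := by
  have h1 := Nat.add_one_mul_choose_eq (2 * n + 2) (n + 1)
  have h2 := Nat.add_one_mul_choose_eq (2 * n + 1) n
  rw [← Nat.choose_symm_half] at h2
  -- together: (n + 2) (n + 1) C(2n+3, n+2) = (2n + 3) (2n + 2) C(2n+1, n+1)
  refine Nat.le_of_mul_le_mul_left (c := (n + 2) * (n + 1)) ?_ (by positivity)
  nlinarith

lemma voteKernel_nonneg (n : ℕ) {r : ℝ} (hr : 0 ≤ r) : 0 ≤ voteKernel n r := by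
  unfold voteKernel
  positivity

lemma voteKernel_succ_le (n : ℕ) {r : ℝ} (hr : r ∈ Set.Icc (0 : ℝ) (1 / 4)) :
    voteKernel (n + 1) r ≤ voteKernel n r := by
  have hc : ((2 * n + 3).choose (n + 2) : ℝ) ≤ 4 * (2 * n + 1).choose (n + 1) := by
    exact_mod_cast choose_two_mul_add_three_le n
  calc voteKernel (n + 1) r = ((2 * n + 3).choose (n + 2) : ℝ) * r * r ^ (n + 1) := by
        rw [voteKernel, show 2 * (n + 1) + 1 = 2 * n + 3 by ring]
        ring
    _ ≤ (4 * (2 * n + 1).choose (n + 1) : ℝ) * (1 / 4) * r ^ (n + 1) := by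
        gcongr
        · exact pow_nonneg hr.1 _
        · exact hr.1
        · exact hr.2
    _ = voteKernel n r := by
        rw [voteKernel]
        ring

lemma continuous_voteKernel (n : ℕ) : Continuous (voteKernel n) := by
  unfold voteKernel
  fun_prop

lemma continuous_majP (n : ℕ) : Continuous (majP n) := by
  unfold majP
  fun_prop

lemma voteV_succ_sub {μ : Measure ℝ} [IsFiniteMeasure μ] (hμ : μ (Set.Icc (0 : ℝ) 1)ᶜ = 0)
    (n : ℕ) : voteV μ (n + 1) - voteV μ n =
      ∫ q in Set.Icc 0 1, (2 * q - 1) * voteKernel n (q * (1 - q)) ∂μ := by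
  have hres : μ.restrict (Set.Icc 0 1) = μ := Measure.restrict_eq_self_of_ae_mem hμ
  have hint (k : ℕ) : Integrable (majP k) μ := by
    rw [← hres]
    exact (continuous_majP k).integrableOn_Icc
  rw [voteV, voteV, ← integral_sub (hint _) (hint _)]
  conv_lhs => rw [← hres]
  simp only [majP_succ_sub]

lemma voteV_sub_sub {μ : Measure ℝ} [IsFiniteMeasure μ] (hμ : μ (Set.Icc (0 : ℝ) 1)ᶜ = 0)
    (n : ℕ) : (voteV μ (n + 1) - voteV μ n) - (voteV μ (n + 2) - voteV μ (n + 1)) =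
      ∫ q in Set.Icc 0 1,
        (2 * q - 1) * (voteKernel n (q * (1 - q)) - voteKernel (n + 1) (q * (1 - q))) ∂μ := by
  have hk := continuous_voteKernel
  rw [voteV_succ_sub hμ n, voteV_succ_sub hμ (n + 1), ← integral_sub
    (by fun_prop : Continuous _).integrableOn_Icc (by fun_prop : Continuous _).integrableOn_Icc]
  simp only [mul_sub]

lemma MeasureTheory.Measure.le_of_forall_toReal_le {α : Type*} [MeasurableSpace α]
    {ν ρ : Measure α} [IsFiniteMeasure ν] [IsFiniteMeasure ρ]
    (h : ∀ B, MeasurableSet B → (ν B).toReal ≤ (ρ B).toReal) : ν ≤ ρ :=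
  Measure.le_iff.2 fun B hB =>
    (ENNReal.toReal_le_toReal (measure_ne_top _ _) (measure_ne_top _ _)).1 (h B hB)

lemma integral_mono_measure_of_nonneg_on {α : Type*} [TopologicalSpace α] [MeasurableSpace α]
    [OpensMeasurableSpace α] [T2Space α] {ν ρ : Measure α} [IsFiniteMeasure ρ] {s : Set α}
    (hs : IsCompact s) (hνρ : ν ≤ ρ) (hρ : ∀ᵐ x ∂ρ, x ∈ s) {φ : α → ℝ} (hφ : Continuous φ)
    (hφs : ∀ x ∈ s, 0 ≤ φ x) :
    ∫ x, φ x ∂ν ≤ ∫ x, φ x ∂ρ := by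
  refine integral_mono_measure hνρ (hρ.mono hφs) ?_
  rw [← Measure.restrict_eq_self_of_ae_mem hρ]
  exact hφ.continuousOn.integrableOn_compact hs

/-- `signature μ` is `signaturePart μ (2q - 1) - signaturePart μ (1 - 2q)`: the pushforwards of the
positive and negative parts of `(2q - 1) · μ` on `[0, 1]` under `q ↦ q (1 - q)`. -/
noncomputable def signaturePart (μ : Measure ℝ) (g : ℝ → ℝ) : Measure ℝ :=
  ((μ.restrict (Set.Icc 0 1)).withDensity fun q => ENNReal.ofReal (g q)).map fun q => q * (1 - q)

lemma isFiniteMeasure_signaturePart (μ : Measure ℝ) [IsFiniteMeasure μ] {g : ℝ → ℝ}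
    (hg : ∀ q ∈ Set.Icc (0 : ℝ) 1, g q ≤ 1) : IsFiniteMeasure (signaturePart μ g) := by
  have := aux_fin μ g hg
  unfold signaturePart
  infer_instance

lemma signature_apply (μ : Measure ℝ) [IsFiniteMeasure μ] {B : Set ℝ} (hB : MeasurableSet B) :
    signature μ B = (signaturePart μ (fun q => 2 * q - 1) B).toReal
      - (signaturePart μ (fun q => 1 - 2 * q) B).toReal := by
  have := aux_fin μ (fun q => 2 * q - 1) fun q hq => by linarith [hq.2]
  have := aux_fin μ (fun q => 1 - 2 * q) fun q hq => by linarith [hq.1]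
  rw [signature, sub_apply, Measure.toSignedMeasure_apply_measurable hB,
    Measure.toSignedMeasure_apply_measurable hB]
  rfl

lemma ae_mem_Icc_signaturePart (μ : Measure ℝ) (g : ℝ → ℝ) :
    ∀ᵐ r ∂signaturePart μ g, r ∈ Set.Icc (0 : ℝ) (1 / 4) := by
  rw [signaturePart,
    ae_map_iff (p := (· ∈ Set.Icc (0 : ℝ) (1 / 4))) (by fun_prop) measurableSet_Icc]
  filter_upwards [(withDensity_absolutelyContinuous _ _).ae_le
    (ae_restrict_mem (μ := μ) measurableSet_Icc)] with q hq
  exact ⟨mul_nonneg hq.1 (by linarith [hq.2]), by nlinarith [sq_nonneg (2 * q - 1)]⟩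

lemma integral_signaturePart (μ : Measure ℝ) {g : ℝ → ℝ} (hg : Measurable g) {φ : ℝ → ℝ}
    (hφ : Continuous φ) :
    ∫ r, φ r ∂signaturePart μ g = ∫ q in Set.Icc 0 1, max (g q) 0 * φ (q * (1 - q)) ∂μ := by
  rw [signaturePart, integral_map (by fun_prop) hφ.aestronglyMeasurable]
  refine (integral_withDensity_eq_integral_smul hg.real_toNNReal _).trans ?_
  simp only [NNReal.smul_def, Real.coe_toNNReal', smul_eq_mul]

lemma setIntegral_eq_integral_signaturePart_sub (μ : Measure ℝ) [IsFiniteMeasure μ] {φ : ℝ → ℝ}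
    (hφ : Continuous φ) :
    ∫ q in Set.Icc 0 1, (2 * q - 1) * φ (q * (1 - q)) ∂μ =
      ∫ r, φ r ∂signaturePart μ (fun q => 2 * q - 1)
        - ∫ r, φ r ∂signaturePart μ (fun q => 1 - 2 * q) := by
  rw [integral_signaturePart μ (by fun_prop) hφ, integral_signaturePart μ (by fun_prop) hφ,
    ← integral_sub (by fun_prop : Continuous _).integrableOn_Icc
      (by fun_prop : Continuous _).integrableOn_Icc]
  congr 1 with q
  rw [← sub_mul, show 1 - 2 * q = -(2 * q - 1) by ring, max_zero_sub_max_neg_zero_eq_self]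

section signature

variable (μ : Measure ℝ) [IsFiniteMeasure μ]

lemma isFiniteMeasure_signaturePart_pos :
    IsFiniteMeasure (signaturePart μ fun q => 2 * q - 1) :=
  isFiniteMeasure_signaturePart μ fun _ hq => by linarith [hq.2]

lemma isFiniteMeasure_signaturePart_neg :
    IsFiniteMeasure (signaturePart μ fun q => 1 - 2 * q) :=
  isFiniteMeasure_signaturePart μ fun _ hq => by linarith [hq.1]

lemma setIntegral_nonneg_of_signature_nonneg (hsig : ∀ B, MeasurableSet B → 0 ≤ signature μ B)
    {φ : ℝ → ℝ} (hφ : Continuous φ) (hφ0 : ∀ r ∈ Set.Icc (0 : ℝ) (1 / 4), 0 ≤ φ r) :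
    0 ≤ ∫ q in Set.Icc 0 1, (2 * q - 1) * φ (q * (1 - q)) ∂μ := by
  have := isFiniteMeasure_signaturePart_pos μ
  have := isFiniteMeasure_signaturePart_neg μ
  have hle : signaturePart μ (fun q => 1 - 2 * q) ≤ signaturePart μ (fun q => 2 * q - 1) :=
    Measure.le_of_forall_toReal_le fun B hB => by
      linarith [hsig B hB, signature_apply μ hB]
  rw [setIntegral_eq_integral_signaturePart_sub μ hφ, sub_nonneg]
  exact integral_mono_measure_of_nonneg_on isCompact_Icc hle
    (ae_mem_Icc_signaturePart μ _) hφ hφ0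

lemma setIntegral_nonpos_of_signature_nonpos (hsig : ∀ B, MeasurableSet B → signature μ B ≤ 0)
    {φ : ℝ → ℝ} (hφ : Continuous φ) (hφ0 : ∀ r ∈ Set.Icc (0 : ℝ) (1 / 4), 0 ≤ φ r) :
    ∫ q in Set.Icc 0 1, (2 * q - 1) * φ (q * (1 - q)) ∂μ ≤ 0 := by
  have := isFiniteMeasure_signaturePart_pos μ
  have := isFiniteMeasure_signaturePart_neg μ
  have hle : signaturePart μ (fun q => 2 * q - 1) ≤ signaturePart μ (fun q => 1 - 2 * q) :=
    Measure.le_of_forall_toReal_le fun B hB => by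
      linarith [hsig B hB, signature_apply μ hB]
  rw [setIntegral_eq_integral_signaturePart_sub μ hφ, sub_nonpos]
  exact integral_mono_measure_of_nonneg_on isCompact_Icc hle
    (ae_mem_Icc_signaturePart μ _) hφ hφ0

end signature

/-- Shape criterion: a nonnegative signed voting signature gives a nondecreasing,
discretely concave voting curve; a nonpositive one gives a nonincreasing, discretely
convex curve. -/
theorem stmt13 (μ : Measure ℝ) [IsProbabilityMeasure μ] (hμ : μ (Set.Icc (0:ℝ) 1)ᶜ = 0) :
    ((∀ B : Set ℝ, MeasurableSet B → 0 ≤ signature μ B) →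
      (∀ n : ℕ, voteV μ n ≤ voteV μ (n+1)) ∧
      (∀ n : ℕ, voteV μ (n+2) - voteV μ (n+1) ≤ voteV μ (n+1) - voteV μ n)) ∧
    ((∀ B : Set ℝ, MeasurableSet B → signature μ B ≤ 0) →
      (∀ n : ℕ, voteV μ (n+1) ≤ voteV μ n) ∧
      (∀ n : ℕ, voteV μ (n+1) - voteV μ n ≤ voteV μ (n+2) - voteV μ (n+1))) := by
  have hsub_cont (n : ℕ) : Continuous fun r => voteKernel n r - voteKernel (n + 1) r :=
    (continuous_voteKernel n).sub (continuous_voteKernel (n + 1))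
  have hnonneg (n : ℕ) : ∀ r ∈ Set.Icc (0 : ℝ) (1 / 4), 0 ≤ voteKernel n r :=
    fun _ hr => voteKernel_nonneg n hr.1
  have hsub_nonneg (n : ℕ) :
      ∀ r ∈ Set.Icc (0 : ℝ) (1 / 4), 0 ≤ voteKernel n r - voteKernel (n + 1) r :=
    fun _ hr => sub_nonneg.2 (voteKernel_succ_le n hr)
  refine ⟨fun hsig => ⟨fun n => ?_, fun n => ?_⟩, fun hsig => ⟨fun n => ?_, fun n => ?_⟩⟩
  · linarith [voteV_succ_sub hμ n,
      setIntegral_nonneg_of_signature_nonneg μ hsig (continuous_voteKernel n) (hnonneg n)]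
  · linarith [voteV_sub_sub hμ n,
      setIntegral_nonneg_of_signature_nonneg μ hsig (hsub_cont n) (hsub_nonneg n)]
  · linarith [voteV_succ_sub hμ n,
      setIntegral_nonpos_of_signature_nonpos μ hsig (continuous_voteKernel n) (hnonneg n)]
  · linarith [voteV_sub_sub hμ n,
      setIntegral_nonpos_of_signature_nonpos μ hsig (hsub_cont n) (hsub_nonneg n)]
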